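/- Let V and W be subspaces of ℝ^n and v a nonzero vector with nonzero projection P_W v onto W. Then θ(v, V) ≤ θ(v, W) + θ(P_W v, V), where θ denotes the angle between a vector and a subspace. -/

import Mathlib

/-!
Write `P_U` for the orthogonal projection onto `U`. Since `⟪v, P_U v⟫ = ‖P_U v‖²`, the angle
`θ(v, U)` is the ordinary angle between `v` and `P_U v`, and since `⟪v, u⟫ = ⟪P_U v, u⟫` for
`u ∈ U`, Cauchy–Schwarz shows that `P_U v` makes the smallest angle with `v` among all vectors
of `U`. Taking `u = P_V (P_W v) ∈ V`, the triangle inequality for angles gives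
`θ(v, V) ≤ ∠(v, u) ≤ ∠(v, P_W v) + ∠(P_W v, u) = θ(v, W) + θ(P_W v, V)`.
-/

/-- The angle between a nonzero vector `v` and a subspace `V`,
defined as `arccos (‖P_V v‖ / ‖v‖)`. -/
noncomputable def angleToSubspace {n : ℕ}
    (V : Submodule ℝ (EuclideanSpace ℝ (Fin n)))
    (v : EuclideanSpace ℝ (Fin n)) : ℝ :=
  Real.arccos (‖((Submodule.orthogonalProjectionOnto V v : V) : EuclideanSpace ℝ (Fin n))‖ / ‖v‖)

open InnerProductGeometry Real

namespace Submodule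

variable {E : Type*} [NormedAddCommGroup E] [InnerProductSpace ℝ E]
  (K : Submodule ℝ E) [K.HasOrthogonalProjection]

theorem real_inner_starProjection_of_mem (v : E) {u : E} (hu : u ∈ K) :
    inner ℝ v u = inner ℝ (K.starProjection v) u := by
  have h := K.starProjection_inner_eq_zero v u hu
  rwa [inner_sub_left, sub_eq_zero] at h

theorem real_inner_starProjection_self (v : E) :
    inner ℝ v (K.starProjection v) = ‖K.starProjection v‖ ^ 2 := by
  rw [K.real_inner_starProjection_of_mem v (K.starProjection_apply_mem v),
    real_inner_self_eq_norm_sq]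

-- Also valid when `v = 0` or `K.starProjection v = 0`: both sides are then `π / 2`.
theorem angle_starProjection (v : E) :
    angle v (K.starProjection v) = arccos (‖K.starProjection v‖ / ‖v‖) := by
  rw [angle, real_inner_starProjection_self]
  rcases eq_or_ne ‖K.starProjection v‖ 0 with h | h
  · simp [h]
  · rw [sq, mul_comm ‖v‖, mul_div_mul_left _ _ h]

theorem angle_starProjection_le_angle_of_mem (v : E) {u : E} (hu : u ∈ K) :
    angle v (K.starProjection v) ≤ angle v u := by
  rw [angle_starProjection, angle, K.real_inner_starProjection_of_mem v hu]
  refine arccos_le_arccos ?_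
  calc inner ℝ (K.starProjection v) u / (‖v‖ * ‖u‖)
      ≤ ‖K.starProjection v‖ * ‖u‖ / (‖v‖ * ‖u‖) := by
        gcongr
        exact real_inner_le_norm _ _
    _ = ‖K.starProjection v‖ / ‖v‖ * (‖u‖ / ‖u‖) := mul_div_mul_comm _ _ _ _
    _ ≤ ‖K.starProjection v‖ / ‖v‖ :=
        mul_le_of_le_one_right (by positivity) (div_self_le_one _)

end Submodule

theorem angleToSubspace_eq_angle {n : ℕ} (V : Submodule ℝ (EuclideanSpace ℝ (Fin n)))
    (v : EuclideanSpace ℝ (Fin n)) :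
    angleToSubspace V v = angle v (V.starProjection v) :=
  (V.angle_starProjection v).symm

theorem angleToSubspace_le_add'_general (n : ℕ)
    (V W : Submodule ℝ (EuclideanSpace ℝ (Fin n)))
    (v : EuclideanSpace ℝ (Fin n)) :
    angleToSubspace V v ≤
      angleToSubspace W v +
        angleToSubspace V ((Submodule.orthogonalProjectionOnto W v : W) : EuclideanSpace ℝ (Fin n)) := by
  rw [Submodule.coe_orthogonalProjectionOnto_apply]
  set w := W.starProjection v
  simp only [angleToSubspace_eq_angle]
  calc angle v (V.starProjection v)
      ≤ angle v (V.starProjection w) :=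
        V.angle_starProjection_le_angle_of_mem v (V.starProjection_apply_mem w)
    _ ≤ angle v w + angle w (V.starProjection w) := angle_le_angle_add_angle _ _ _

/-- Upper-bound half of Theorem 2 of the paper: `θ ≤ θ̂ + θ₂*`, i.e. for subspaces
`V, W` of `ℝⁿ` and any nonzero `v` with `P_W v ≠ 0`,
`θ(v, V) ≤ θ(v, W) + θ(P_W v, V)`. -/
theorem angleToSubspace_le_add' (n : ℕ)
    (V W : Submodule ℝ (EuclideanSpace ℝ (Fin n)))
    (v : EuclideanSpace ℝ (Fin n)) (hv : v ≠ 0)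
    (hPv : ((Submodule.orthogonalProjectionOnto W v : W) : EuclideanSpace ℝ (Fin n)) ≠ 0) :
    angleToSubspace V v ≤
      angleToSubspace W v +
        angleToSubspace V ((Submodule.orthogonalProjectionOnto W v : W) : EuclideanSpace ℝ (Fin n)) :=
  angleToSubspace_le_add'_general n V W v
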